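/- arXiv:2205.07039 — 2 statements merged into one kernel-verified Lean document; each statement's English description precedes it below -/
import Mathlib

section
/- Let n be a positive integer, let M and M' be n×n column stochastic real matrices, let α ∈ [0,1), and let q ∈ ℝⁿ. Define p = ∑_{k=0}^∞ (α M)^k q (which converges since α < 1). Then p + ∑_{k=0}^∞ (α M')^k (α (M' − M) p) = ∑_{k=0}^∞ (α M')^k q. In other words, adding the propagated pushout correction to the old vector p yields exactly the cumulative-power-iteration vector of the updated matrix M' with the same source vector q. (Exactness part of the paper's Theorem on the 2-Hop Dynamic Propagation Scheme.) -/
open Matrix BigOperators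

lemma l1_step (n : ℕ) (M : Matrix (Fin n) (Fin n) ℝ)
    (hnn : ∀ i j, 0 ≤ M i j) (hcol : ∀ j, ∑ i, M i j = 1) (v : Fin n → ℝ) :
    ∑ i, |(M *ᵥ v) i| ≤ ∑ i, |v i| := by
  have : ∀ i, |(M *ᵥ v) i| ≤ ∑ j, M i j * |v j| := by
    intro i
    calc |∑ j, M i j * v j| ≤ ∑ j, |M i j * v j| := Finset.abs_sum_le_sum_abs _ _
      _ = ∑ j, M i j * |v j| := by
          refine Finset.sum_congr rfl fun j _ => ?_
          rw [abs_mul, abs_of_nonneg (hnn i j)]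
  calc ∑ i, |(M *ᵥ v) i| ≤ ∑ i, ∑ j, M i j * |v j| :=
        Finset.sum_le_sum fun i _ => this i
    _ = ∑ j, (∑ i, M i j) * |v j| := by rw [Finset.sum_comm]; simp [Finset.sum_mul]
    _ = ∑ j, |v j| := by simp [hcol]

lemma l1_pow (n : ℕ) (M : Matrix (Fin n) (Fin n) ℝ)
    (hnn : ∀ i j, 0 ≤ M i j) (hcol : ∀ j, ∑ i, M i j = 1)
    (α : ℝ) (hα0 : 0 ≤ α) (k : ℕ) (v : Fin n → ℝ) :
    ∑ i, |(((α • M) ^ k) *ᵥ v) i| ≤ α ^ k * ∑ i, |v i| := by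
  induction k with
  | zero => simp
  | succ k ih =>
      have h1 : ((α • M) ^ (k+1)) *ᵥ v = (α • M) *ᵥ (((α • M) ^ k) *ᵥ v) := by
        rw [mulVec_mulVec, ← pow_succ']
      rw [h1]
      have h2 : (α • M) *ᵥ (((α • M) ^ k) *ᵥ v) = α • (M *ᵥ (((α • M) ^ k) *ᵥ v)) :=
        smul_mulVec α M _
      rw [h2]
      calc ∑ i, |(α • (M *ᵥ (((α • M) ^ k) *ᵥ v))) i|
          = α * ∑ i, |(M *ᵥ (((α • M) ^ k) *ᵥ v)) i| := by
            simp [abs_mul, abs_of_nonneg hα0, Finset.mul_sum]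
        _ ≤ α * ∑ i, |(((α • M) ^ k) *ᵥ v) i| := by
            exact mul_le_mul_of_nonneg_left (l1_step n M hnn hcol _) hα0
        _ ≤ α * (α ^ k * ∑ i, |v i|) := mul_le_mul_of_nonneg_left ih hα0
        _ = α ^ (k+1) * ∑ i, |v i| := by ring

lemma summ_pow (n : ℕ) (M : Matrix (Fin n) (Fin n) ℝ)
    (hnn : ∀ i j, 0 ≤ M i j) (hcol : ∀ j, ∑ i, M i j = 1)
    (α : ℝ) (hα0 : 0 ≤ α) (hα1 : α < 1) (v : Fin n → ℝ) :
    Summable (fun k : ℕ => ((α • M) ^ k) *ᵥ v) := by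
  apply Summable.of_norm_bounded (g := fun k => α ^ k * ∑ i, |v i|)
  · exact (summable_geometric_of_lt_one hα0 hα1).mul_right _
  · intro k
    have hb := l1_pow n M hnn hcol α hα0 k v
    refine le_trans ?_ hb
    refine (pi_norm_le_iff_of_nonneg (Finset.sum_nonneg fun i _ => abs_nonneg _)).2 fun i => ?_
    exact Finset.single_le_sum (fun i _ => abs_nonneg (((α • M) ^ k *ᵥ v) i)) (Finset.mem_univ i)

/-- (Exactness part of the 2-hop dynamic propagation theorem.)
For `n × n` column stochastic matrices `M, M'`, `α ∈ [0,1)`, source vector `q ∈ ℝⁿ`,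
and `p = ∑_{k=0}^∞ (α M)^k q`, we have
`p + ∑_{k=0}^∞ (α M')^k (α (M' − M) p) = ∑_{k=0}^∞ (α M')^k q`. -/
theorem pushout_exactness
    (n : ℕ) (hn : 0 < n)
    (M M' : Matrix (Fin n) (Fin n) ℝ)
    (hMnonneg : ∀ i j, 0 ≤ M i j)
    (hMcol : ∀ j, ∑ i, M i j = 1)
    (hM'nonneg : ∀ i j, 0 ≤ M' i j)
    (hM'col : ∀ j, ∑ i, M' i j = 1)
    (α : ℝ) (hα0 : 0 ≤ α) (hα1 : α < 1)
    (q : Fin n → ℝ)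
    (p : Fin n → ℝ) (hp : p = ∑' k : ℕ, ((α • M) ^ k) *ᵥ q) :
    p + (∑' k : ℕ, ((α • M') ^ k) *ᵥ (α • ((M' - M) *ᵥ p))) =
      ∑' k : ℕ, ((α • M') ^ k) *ᵥ q := by
  set A := α • M with hA
  set B := α • M' with hB
  have hqA : Summable (fun k : ℕ => (A ^ k) *ᵥ q) := summ_pow n M hMnonneg hMcol α hα0 hα1 q
  have hqB : Summable (fun k : ℕ => (B ^ k) *ᵥ q) := summ_pow n M' hM'nonneg hM'col α hα0 hα1 q
  have hpB : Summable (fun k : ℕ => (B ^ k) *ᵥ p) := summ_pow n M' hM'nonneg hM'col α hα0 hα1 p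
  -- A *ᵥ p = p - q
  have hmapA : A *ᵥ p = ∑' k : ℕ, A *ᵥ ((A ^ k) *ᵥ q) := by
    rw [hp]
    exact ((A.mulVecLin.toContinuousLinearMap).map_tsum hqA)
  have hAp : A *ᵥ p = p - q := by
    have h1 : (fun k : ℕ => A *ᵥ ((A ^ k) *ᵥ q)) = fun k : ℕ => (A ^ (k+1)) *ᵥ q := by
      funext k; rw [mulVec_mulVec, ← pow_succ']
    have h2 : p = q + ∑' k : ℕ, (A ^ (k+1)) *ᵥ q := by
      rw [hp, Summable.tsum_eq_zero_add hqA]; simp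
    rw [hmapA, h1, h2]; abel
  -- pushout vector decomposition
  have hpush : α • ((M' - M) *ᵥ p) = B *ᵥ p - (p - q) := by
    rw [← hAp, hB, hA]
    rw [sub_mulVec]
    simp [smul_mulVec, smul_sub]
  -- summability pieces
  have hBpshift : Summable (fun k : ℕ => (B ^ (k+1)) *ᵥ p) := by
    have := (summable_nat_add_iff 1).2 hpB
    simpa using this
  have hmix : Summable (fun k : ℕ => (B ^ k) *ᵥ (p - q)) := by
    have : (fun k : ℕ => (B ^ k) *ᵥ (p - q)) = fun k => (B ^ k) *ᵥ p - (B ^ k) *ᵥ q := by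
      funext k; rw [mulVec_sub]
    rw [this]; exact hpB.sub hqB
  have hterm : (fun k : ℕ => (B ^ k) *ᵥ (α • ((M' - M) *ᵥ p)))
      = fun k : ℕ => (B ^ (k+1)) *ᵥ p - (B ^ k) *ᵥ (p - q) := by
    funext k
    rw [hpush, mulVec_sub, mulVec_mulVec, ← pow_succ]
  rw [hterm, Summable.tsum_sub hBpshift hmix]
  have h3 : ∑' k : ℕ, (B ^ (k+1)) *ᵥ p = (∑' k : ℕ, (B ^ k) *ᵥ p) - p := by
    have := Summable.tsum_eq_zero_add hpB
    simp only [pow_zero, one_mulVec] at this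
    rw [this]; abel
  have h4 : ∑' k : ℕ, (B ^ k) *ᵥ (p - q)
      = (∑' k : ℕ, (B ^ k) *ᵥ p) - ∑' k : ℕ, (B ^ k) *ᵥ q := by
    rw [← Summable.tsum_sub hpB hqB]
    congr 1; funext k; rw [mulVec_sub]
  rw [h3, h4]; abel
end

section
/- Let n be a positive integer and α ∈ [0,1). Let M_an, M_nn, M_aa and M_an', M_nn', M_aa' be n×n column stochastic real matrices, let β₀, β₁, β₂ be nonnegative reals with β₀ + β₁ + β₂ = 1, and set M = β₀ M_an + β₁ M_nn + β₂ M_aa and M' = β₀ M_an' + β₁ M_nn' + β₂ M_aa'. Let q ∈ ℝⁿ and p = ∑_{k=0}^∞ (α M)^k q. Then (i) the series ∑_{k=0}^∞ (α M')^k (α (M' − M) p) converges, and (ii) p + ∑_{k=0}^∞ (α M')^k (α (M' − M) p) = ∑_{k=0}^∞ (α M')^k q. (Convergence and exactness of the mixed dynamic propagation scheme.) -/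
open Matrix BigOperators

/-! Convex combinations of column stochastic matrices are column stochastic, and the ℓ¹ operator
norm of a column stochastic matrix is `1`, so `N = ∑ (α M)^k` and `N' = ∑ (α M')^k` converge and
invert `1 - α M` and `1 - α M'`. The claim is the resolvent identity
`N' - N = N' (α M' - α M) N` applied to `q`, because `p = N q`. -/

theorem Convex.smul_add_smul_add_smul_mem {𝕜 E : Type*} [Field 𝕜] [LinearOrder 𝕜]
    [IsStrictOrderedRing 𝕜] [AddCommGroup E] [Module 𝕜 E] {s : Set E} (hs : Convex 𝕜 s)
    {x y z : E} (hx : x ∈ s) (hy : y ∈ s) (hz : z ∈ s) {a b c : 𝕜} (ha : 0 ≤ a) (hb : 0 ≤ b)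
    (hc : 0 ≤ c) (habc : a + b + c = 1) : a • x + b • y + c • z ∈ s := by
  have := hs.sum_mem (t := Finset.univ) (w := ![a, b, c]) (z := ![x, y, z])
    (by simp [Fin.forall_fin_succ, ha, hb, hc]) (by simp [Fin.sum_univ_three, habc])
    (by simp [Fin.forall_fin_succ, hx, hy, hz])
  simpa [Fin.sum_univ_three] using this

theorem Summable.tsum_pow_sub_tsum_pow {R : Type*} [Ring R] [TopologicalSpace R]
    [IsTopologicalRing R] [T2Space R] {x y : R} (hx : Summable (x ^ ·)) (hy : Summable (y ^ ·)) :
    ∑' k, y ^ k - ∑' k, x ^ k = (∑' k, y ^ k) * (y - x) * ∑' k, x ^ k :=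
  calc ∑' k, y ^ k - ∑' k, x ^ k
      = (∑' k, y ^ k) * (1 - x) * ∑' k, x ^ k - (∑' k, y ^ k) * (1 - y) * ∑' k, x ^ k := by
        rw [mul_assoc, hx.one_sub_mul_tsum_pow, hy.tsum_pow_mul_one_sub, mul_one, one_mul]
    _ = (∑' k, y ^ k) * (y - x) * ∑' k, x ^ k := by noncomm_ring

theorem HasSum.matrix_mulVec {X R m n : Type*} [Fintype n] [NonUnitalNonAssocSemiring R]
    [TopologicalSpace R] [IsTopologicalSemiring R] {f : X → Matrix m n R} {A : Matrix m n R}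
    (hf : HasSum f A) (v : n → R) : HasSum (fun x => f x *ᵥ v) (A *ᵥ v) :=
  hf.map (mulVec.addMonoidHomLeft v) (continuous_id.matrix_mulVec continuous_const)

namespace Matrix

variable {ι : Type*} [Fintype ι] [DecidableEq ι]

section LinftyOpNorm

attribute [local instance] Matrix.linftyOpNormedRing Matrix.linftyOpNormedAlgebra

theorem linfty_opNorm_le_one_of_mem_rowStochastic {A : Matrix ι ι ℝ}
    (hA : A ∈ rowStochastic ℝ ι) : ‖A‖ ≤ 1 := by
  rw [linfty_opNorm_def, NNReal.coe_le_one]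
  refine Finset.sup_le fun i _ => ?_
  rw [← NNReal.coe_le_one, NNReal.coe_sum]
  simp_rw [coe_nnnorm, Real.norm_of_nonneg (nonneg_of_mem_rowStochastic hA),
    sum_row_of_mem_rowStochastic hA, le_refl]

theorem summable_pow_smul_of_mem_rowStochastic {A : Matrix ι ι ℝ} (hA : A ∈ rowStochastic ℝ ι)
    {α : ℝ} (hα0 : 0 ≤ α) (hα1 : α < 1) : Summable ((α • A) ^ ·) := by
  refine summable_geometric_of_norm_lt_one ?_
  calc ‖α • A‖ = α * ‖A‖ := by rw [norm_smul, Real.norm_of_nonneg hα0]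
    _ ≤ α := mul_le_of_le_one_right hα0 (linfty_opNorm_le_one_of_mem_rowStochastic hA)
    _ < 1 := hα1

end LinftyOpNorm

/-- Mathlib's matrix operator norm is the ℓ∞ one (maximal row sum), hence the transpose. -/
theorem summable_pow_smul_of_mem_colStochastic {A : Matrix ι ι ℝ} (hA : A ∈ colStochastic ℝ ι)
    {α : ℝ} (hα0 : 0 ≤ α) (hα1 : α < 1) : Summable ((α • A) ^ ·) := by
  have := summable_pow_smul_of_mem_rowStochastic
    (transpose_mem_rowStochastic_iff_mem_colStochastic.mpr hA) hα0 hα1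
  simpa [← transpose_smul, ← transpose_pow] using this.matrix_transpose

end Matrix

theorem mixed_dynamic_propagation_general
    (n : ℕ)
    (α : ℝ) (hα0 : 0 ≤ α) (hα1 : α < 1)
    (Man Mnn Maa Man' Mnn' Maa' : Matrix (Fin n) (Fin n) ℝ)
    (hMan : (∀ i j, 0 ≤ Man i j) ∧ ∀ j, ∑ i, Man i j = 1)
    (hMnn : (∀ i j, 0 ≤ Mnn i j) ∧ ∀ j, ∑ i, Mnn i j = 1)
    (hMaa : (∀ i j, 0 ≤ Maa i j) ∧ ∀ j, ∑ i, Maa i j = 1)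
    (hMan' : (∀ i j, 0 ≤ Man' i j) ∧ ∀ j, ∑ i, Man' i j = 1)
    (hMnn' : (∀ i j, 0 ≤ Mnn' i j) ∧ ∀ j, ∑ i, Mnn' i j = 1)
    (hMaa' : (∀ i j, 0 ≤ Maa' i j) ∧ ∀ j, ∑ i, Maa' i j = 1)
    (β₀ β₁ β₂ : ℝ) (hβ₀ : 0 ≤ β₀) (hβ₁ : 0 ≤ β₁) (hβ₂ : 0 ≤ β₂)
    (hβsum : β₀ + β₁ + β₂ = 1)
    (M M' : Matrix (Fin n) (Fin n) ℝ)
    (hM : M = β₀ • Man + β₁ • Mnn + β₂ • Maa)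
    (hM' : M' = β₀ • Man' + β₁ • Mnn' + β₂ • Maa')
    (q : Fin n → ℝ)
    (p : Fin n → ℝ) (hp : p = ∑' k : ℕ, ((α • M) ^ k) *ᵥ q) :
    Summable (fun k : ℕ => ((α • M') ^ k) *ᵥ (α • ((M' - M) *ᵥ p))) ∧
      p + (∑' k : ℕ, ((α • M') ^ k) *ᵥ (α • ((M' - M) *ᵥ p))) =
        ∑' k : ℕ, ((α • M') ^ k) *ᵥ q := by
  rw [← mem_colStochastic_iff_sum] at hMan hMnn hMaa hMan' hMnn' hMaa'
  have hMs : M ∈ colStochastic ℝ (Fin n) := hM ▸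
    convex_colStochastic.smul_add_smul_add_smul_mem hMan hMnn hMaa hβ₀ hβ₁ hβ₂ hβsum
  have hMs' : M' ∈ colStochastic ℝ (Fin n) := hM' ▸
    convex_colStochastic.smul_add_smul_add_smul_mem hMan' hMnn' hMaa' hβ₀ hβ₁ hβ₂ hβsum
  have hsum := summable_pow_smul_of_mem_colStochastic hMs hα0 hα1
  have hsum' := summable_pow_smul_of_mem_colStochastic hMs' hα0 hα1
  have hp' : p = (∑' k, (α • M) ^ k) *ᵥ q := hp.trans (hsum.hasSum.matrix_mulVec q).tsum_eq
  have hres := congrArg (· *ᵥ q) (hsum.tsum_pow_sub_tsum_pow hsum')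
  simp only [sub_mulVec, ← mulVec_mulVec, ← hp', ← smul_sub, smul_mulVec] at hres
  refine ⟨(hsum'.hasSum.matrix_mulVec _).summable, ?_⟩
  rw [(hsum'.hasSum.matrix_mulVec _).tsum_eq, (hsum'.hasSum.matrix_mulVec q).tsum_eq,
    sub_mulVec]
  exact (eq_add_of_sub_eq' hres).symm

/-- (Convergence and exactness of the mixed dynamic propagation scheme.)
With `M` and `M'` convex combinations (weights `β₀ + β₁ + β₂ = 1`) of column stochastic
matrices, `α ∈ [0,1)`, `q ∈ ℝⁿ` and `p = ∑_{k=0}^∞ (α M)^k q`, the pushout series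
`∑_{k=0}^∞ (α M')^k (α (M' − M) p)` converges, and
`p + ∑_{k=0}^∞ (α M')^k (α (M' − M) p) = ∑_{k=0}^∞ (α M')^k q`. -/
theorem mixed_dynamic_propagation
    (n : ℕ) (hn : 0 < n)
    (α : ℝ) (hα0 : 0 ≤ α) (hα1 : α < 1)
    (Man Mnn Maa Man' Mnn' Maa' : Matrix (Fin n) (Fin n) ℝ)
    (hMan : (∀ i j, 0 ≤ Man i j) ∧ ∀ j, ∑ i, Man i j = 1)
    (hMnn : (∀ i j, 0 ≤ Mnn i j) ∧ ∀ j, ∑ i, Mnn i j = 1)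
    (hMaa : (∀ i j, 0 ≤ Maa i j) ∧ ∀ j, ∑ i, Maa i j = 1)
    (hMan' : (∀ i j, 0 ≤ Man' i j) ∧ ∀ j, ∑ i, Man' i j = 1)
    (hMnn' : (∀ i j, 0 ≤ Mnn' i j) ∧ ∀ j, ∑ i, Mnn' i j = 1)
    (hMaa' : (∀ i j, 0 ≤ Maa' i j) ∧ ∀ j, ∑ i, Maa' i j = 1)
    (β₀ β₁ β₂ : ℝ) (hβ₀ : 0 ≤ β₀) (hβ₁ : 0 ≤ β₁) (hβ₂ : 0 ≤ β₂)
    (hβsum : β₀ + β₁ + β₂ = 1)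
    (M M' : Matrix (Fin n) (Fin n) ℝ)
    (hM : M = β₀ • Man + β₁ • Mnn + β₂ • Maa)
    (hM' : M' = β₀ • Man' + β₁ • Mnn' + β₂ • Maa')
    (q : Fin n → ℝ)
    (p : Fin n → ℝ) (hp : p = ∑' k : ℕ, ((α • M) ^ k) *ᵥ q) :
    Summable (fun k : ℕ => ((α • M') ^ k) *ᵥ (α • ((M' - M) *ᵥ p))) ∧
      p + (∑' k : ℕ, ((α • M') ^ k) *ᵥ (α • ((M' - M) *ᵥ p))) =
        ∑' k : ℕ, ((α • M') ^ k) *ᵥ q :=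
  mixed_dynamic_propagation_general n α hα0 hα1 Man Mnn Maa Man' Mnn' Maa' hMan hMnn hMaa hMan'
    hMnn' hMaa' β₀ β₁ β₂ hβ₀ hβ₁ hβ₂ hβsum M M' hM hM' q p hp
end
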